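/- arXiv:2406.07774 — 2 statements merged into one kernel-verified Lean document; each statement's English description precedes it below -/
import Mathlib

section
/- Let a ∈ (0,1) and let Θ be a nonconstant inner function. If the model space (ΘH²)^⊥ is C_{φ_a}-invariant, then Θ(z₁) ≠ 0 for every z₁ ∈ 𝔻 with z₁ ≠ 0. -/
open Complex MeasureTheory Metric Set Filter Topology

noncomputable section

/-- `n`-th Taylor coefficient of `f` at `0`. -/
def H2coeff (f : ℂ → ℂ) (n : ℕ) : ℂ := iteratedDeriv n f 0 / n.factorial

/-- Membership in the Hardy space `H²` of the unit disk, in coefficient form. -/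
def MemH2 (f : ℂ → ℂ) : Prop :=
  DifferentiableOn ℂ f (ball (0 : ℂ) 1) ∧ Summable fun n => ‖H2coeff f n‖ ^ 2

/-- The `H²` inner product (conjugate-linear in the first variable). -/
def H2inner (f g : ℂ → ℂ) : ℂ :=
  ∑' n : ℕ, (starRingEnd ℂ) (H2coeff f n) * H2coeff g n

/-- The `H²` distance between two functions. -/
def H2dist (f g : ℂ → ℂ) : ℝ := Real.sqrt (∑' n : ℕ, ‖H2coeff f n - H2coeff g n‖ ^ 2)

/-- The affine self-map `φ_a(z) = a z + 1 - a` of the unit disk. -/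
def phiA (a : ℝ) : ℂ → ℂ := fun z => (a : ℂ) * z + 1 - (a : ℂ)

/-- The composition operator `C_φ f = f ∘ φ`. -/
def compOp (φ : ℂ → ℂ) (f : ℂ → ℂ) : ℂ → ℂ := f ∘ φ

/-- A set of functions is invariant under an operator. -/
def InvariantUnderOp (T : (ℂ → ℂ) → (ℂ → ℂ)) (M : Set (ℂ → ℂ)) : Prop :=
  ∀ f ∈ M, T f ∈ M

/-- `f` has radial limit `L` at the boundary point `e^{iθ}`. -/
def RadialLimit (f : ℂ → ℂ) (θ : ℝ) (L : ℂ) : Prop :=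
  Tendsto (fun r : ℝ => f ((r : ℂ) * Complex.exp ((θ : ℂ) * Complex.I))) (𝓝[<] (1 : ℝ)) (𝓝 L)

/-- An inner function: a member of `H²` with unimodular radial limits a.e. -/
def IsInnerFn (Θ : ℂ → ℂ) : Prop :=
  MemH2 Θ ∧ ∀ᵐ θ : ℝ, ∃ L : ℂ, RadialLimit Θ θ L ∧ ‖L‖ = 1

/-- `Θ` is nonconstant on the unit disk. -/
def NonconstantOnDisk (Θ : ℂ → ℂ) : Prop :=
  ∃ z ∈ ball (0 : ℂ) 1, ∃ w ∈ ball (0 : ℂ) 1, Θ z ≠ Θ w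

/-- The Beurling subspace `Θ H²`. -/
def BeurlingSpace (Θ : ℂ → ℂ) : Set (ℂ → ℂ) :=
  {f | MemH2 f ∧ ∃ g, MemH2 g ∧ EqOn f (fun z => Θ z * g z) (ball (0 : ℂ) 1)}

/-- The model space `(Θ H²)^⊥`, the orthogonal complement of `Θ H²` in `H²`. -/
def ModelSpace (Θ : ℂ → ℂ) : Set (ℂ → ℂ) :=
  {f | MemH2 f ∧ ∀ g, MemH2 g → H2inner (fun z => Θ z * g z) f = 0}

/-- The singular inner function associated to a measure `μ` on the circle,
parametrized by the angle in `(0, 2π]`. -/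
def singularInnerFun (μ : Measure ℝ) : ℂ → ℂ := fun z =>
  Complex.exp (-∫ t, (Complex.exp ((t : ℂ) * Complex.I) + z) /
    (Complex.exp ((t : ℂ) * Complex.I) - z) ∂μ)

/-- `μ` is a finite positive Borel measure on the circle (parametrized by `(0, 2π]`)
which is singular with respect to Lebesgue measure. -/
def IsSingularMeasure (μ : Measure ℝ) : Prop :=
  IsFiniteMeasure μ ∧ μ (Set.Ioc 0 (2 * Real.pi))ᶜ = 0 ∧ μ.MutuallySingular volume

/-- A single Blaschke factor with zero `w` (with the convention that a zero at the
origin contributes the factor `z`). -/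
def blaschkeFactor (w : ℂ) : ℂ → ℂ := fun z =>
  if w = 0 then z
  else ((starRingEnd ℂ) w / (‖w‖ : ℂ)) * ((w - z) / (1 - (starRingEnd ℂ) w * z))

/-- The Blaschke product with zero sequence `zs`. -/
def blaschkeProd {ι : Type} (zs : ι → ℂ) : ℂ → ℂ := fun z => ∏' i, blaschkeFactor (zs i) z

/-- Regular points of an inner function `Θ`: points of the open disk where `Θ` does not
vanish, and boundary points across which `Θ` extends analytically with unimodular values
on the circle. -/
def RegularPoint (Θ : ℂ → ℂ) (z : ℂ) : Prop :=
  (z ∈ ball (0 : ℂ) 1 ∧ Θ z ≠ 0) ∨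
  (‖z‖ = 1 ∧ ∃ (V : Set ℂ) (g : ℂ → ℂ), IsOpen V ∧ z ∈ V ∧
    DifferentiableOn ℂ g V ∧ EqOn g Θ (V ∩ ball (0 : ℂ) 1) ∧
    ∀ w ∈ V, ‖w‖ = 1 → ‖g w‖ = 1)

/-- The spectrum `σ(Θ)` of an inner function: the complement in the closed disk of the
set of regular points. -/
def innerSpectrum (Θ : ℂ → ℂ) : Set ℂ :=
  {z ∈ closedBall (0 : ℂ) 1 | ¬ RegularPoint Θ z}

/-- Closure of a set of functions in the `H²` metric. -/
def H2Closure (M : Set (ℂ → ℂ)) : Set (ℂ → ℂ) :=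
  {g | MemH2 g ∧ ∀ ε > (0 : ℝ), ∃ f ∈ M, H2dist g f < ε}

/-- A closed linear subspace of `H²`. -/
def IsClosedSubspaceH2 (M : Set (ℂ → ℂ)) : Prop :=
  (∀ f ∈ M, MemH2 f) ∧ (0 : ℂ → ℂ) ∈ M ∧
  (∀ f ∈ M, ∀ g ∈ M, f + g ∈ M) ∧ (∀ c : ℂ, ∀ f ∈ M, c • f ∈ M) ∧
  H2Closure M ⊆ M

/-- `M` contains a function not vanishing identically on the disk. -/
def NontrivialH2 (M : Set (ℂ → ℂ)) : Prop := ∃ f ∈ M, ∃ z ∈ ball (0 : ℂ) 1, f z ≠ 0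

/-- A minimal (nonzero, closed) invariant subspace for the composition operator `C_φ`:
it contains no nonzero proper closed `C_φ`-invariant subspace. -/
def IsMinimalInvariant (φ : ℂ → ℂ) (M : Set (ℂ → ℂ)) : Prop :=
  IsClosedSubspaceH2 M ∧ InvariantUnderOp (compOp φ) M ∧ NontrivialH2 M ∧
  ∀ N : Set (ℂ → ℂ), IsClosedSubspaceH2 N → InvariantUnderOp (compOp φ) N →
    NontrivialH2 N → N ⊆ M → N = M

/-- The closed cyclic invariant subspace `K_f` generated by `f` under `C_φ`. -/
def cyclicSubspace (φ : ℂ → ℂ) (f : ℂ → ℂ) : Set (ℂ → ℂ) :=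
  H2Closure (Submodule.span ℂ {h : ℂ → ℂ | ∃ n : ℕ, h = fun z => f (φ^[n] z)} : Set (ℂ → ℂ))

/-- The Cesàro operator on `H²`. -/
def CesaroOp (f : ℂ → ℂ) : ℂ → ℂ := fun z =>
  ∑' n : ℕ, (((n : ℂ) + 1)⁻¹ * ∑ k ∈ Finset.range (n + 1), H2coeff f k) * z ^ n

/-- The space of (restrictions to the disk of) polynomials of degree at most `N`. -/
def PolySpace (N : ℕ) : Set (ℂ → ℂ) :=
  {f | DifferentiableOn ℂ f (ball (0 : ℂ) 1) ∧
    ∃ p : Polynomial ℂ, p.natDegree ≤ N ∧ ∀ z ∈ ball (0 : ℂ) 1, f z = Polynomial.eval z p}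

/-- The subspace `zⁿ (Θ H²)^⊥` of `H²`. -/
def shiftedModel (n : ℕ) (Θ : ℂ → ℂ) : Set (ℂ → ℂ) :=
  {f | MemH2 f ∧ ∃ g ∈ ModelSpace Θ, ∀ z ∈ ball (0 : ℂ) 1, f z = z ^ n * g z}

/-!
If `Θ(w) = 0`, the Szegő kernel `k_w(z) = (1 - w̄ z)⁻¹` lies in the model space, and
`k_w ∘ φ_a` is a nonzero multiple of `k_{ψ_a(w)}` with `ψ_a(w) = a w / (1 - (1 - a) w)`.
By invariance this multiple is again orthogonal to `Θ H²`, in particular to `Θ`, so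
`Θ(ψ_a(w)) = 0`. Since `ψ_a^[n] = ψ_{a^n}` and `ψ_{a^n}(z₁) → ψ_0(z₁) = 0` through nonzero
points, a zero `z₁ ≠ 0` would produce zeros accumulating at `0`, and the identity theorem would
make `Θ` vanish on the disk.
-/

open scoped ComplexConjugate

lemma one_sub_mul_ne_zero_of_norm_le_one {u v : ℂ} (hu : ‖u‖ ≤ 1) (hv : ‖v‖ < 1) :
    1 - u * v ≠ 0 := by
  intro h
  have : ‖u * v‖ < 1 := by rw [norm_mul]; nlinarith [norm_nonneg u, norm_nonneg v]
  rw [← eq_of_sub_eq_zero h, norm_one] at this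
  exact this.false

lemma norm_one_sub_ofReal {t : ℝ} (ht : t ∈ Icc (0 : ℝ) 1) : ‖1 - (t : ℂ)‖ = 1 - t := by
  rw [← ofReal_one, ← ofReal_sub, norm_real, Real.norm_of_nonneg (by linarith [ht.2])]

def szegoKernel (w z : ℂ) : ℂ := (1 - conj w * z)⁻¹

lemma norm_conj_lt_one {w : ℂ} (hw : w ∈ ball 0 1) : ‖conj w‖ < 1 := by
  rwa [RCLike.norm_conj, ← mem_ball_zero_iff]

lemma H2coeff_eq_coeff {f : ℂ → ℂ} {p : FormalMultilinearSeries ℂ ℂ ℂ}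
    (h : HasFPowerSeriesAt f p 0) (n : ℕ) : H2coeff f n = p.coeff n := by
  rw [← h.analyticAt.hasFPowerSeriesAt.eq_formalMultilinearSeries h,
    FormalMultilinearSeries.coeff_ofScalars, H2coeff]

lemma H2coeff_const_mul (c : ℂ) (f : ℂ → ℂ) (n : ℕ) :
    H2coeff (fun z => c * f z) n = c * H2coeff f n := by
  simp only [H2coeff, iteratedDeriv_const_mul_field, mul_div_assoc]

lemma H2coeff_szegoKernel (w : ℂ) (n : ℕ) : H2coeff (szegoKernel w) n = conj w ^ n := by
  have h := (spectrum.hasFPowerSeriesOnBall_inverse_one_sub_smul ℂ (conj w)).hasFPowerSeriesAt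
  have hk : (fun z : ℂ => Ring.inverse (1 - z • conj w)) = szegoKernel w := by
    funext z; simp [szegoKernel, mul_comm]
  rw [hk] at h
  rw [H2coeff_eq_coeff h]
  simp [FormalMultilinearSeries.coeff]

lemma hasSum_H2coeff_mul_pow {f : ℂ → ℂ} {r : ℝ} (hf : DifferentiableOn ℂ f (ball 0 r))
    {z : ℂ} (hz : z ∈ ball 0 r) : HasSum (fun n => H2coeff f n * z ^ n) (f z) := by
  refine (Complex.hasSum_taylorSeries_on_ball hf hz).congr_fun fun n => ?_
  simp only [H2coeff, sub_zero, smul_eq_mul]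
  ring

lemma memH2_szegoKernel {w : ℂ} (hw : w ∈ ball 0 1) : MemH2 (szegoKernel w) := by
  have hw' := norm_conj_lt_one hw
  refine ⟨fun z hz => ?_, ?_⟩
  · refine (DifferentiableAt.inv (by fun_prop) ?_).differentiableWithinAt
    rw [mul_comm]
    exact one_sub_mul_ne_zero_of_norm_le_one (mem_ball_zero_iff.mp hz).le hw'
  · simp_rw [H2coeff_szegoKernel, norm_pow, ← pow_mul, pow_mul']
    exact summable_geometric_of_lt_one (by positivity)
      (pow_lt_one₀ (norm_nonneg _) hw' two_ne_zero)

lemma H2inner_const_mul_szegoKernel {f : ℂ → ℂ} (hf : DifferentiableOn ℂ f (ball 0 1))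
    {w : ℂ} (hw : w ∈ ball 0 1) (c : ℂ) :
    H2inner f (fun z => c * szegoKernel w z) = c * conj (f w) := by
  have h := ((hasSum_H2coeff_mul_pow hf hw).map (starRingEnd ℂ).toAddMonoidHom
    continuous_conj).mul_left c
  refine Eq.trans (tsum_congr fun n => ?_) h.tsum_eq
  simp only [H2coeff_const_mul, H2coeff_szegoKernel, RingHom.toAddMonoidHom_eq_coe,
    AddMonoidHom.coe_coe, Function.comp_apply, map_mul, map_pow]
  ring

lemma szegoKernel_mem_modelSpace {Θ : ℂ → ℂ} (hΘ : DifferentiableOn ℂ Θ (ball 0 1))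
    {w : ℂ} (hw : w ∈ ball 0 1) (h0 : Θ w = 0) : szegoKernel w ∈ ModelSpace Θ := by
  refine ⟨memH2_szegoKernel hw, fun g hg => ?_⟩
  simpa [h0] using H2inner_const_mul_szegoKernel (f := fun z => Θ z * g z) (hΘ.mul hg.1) hw 1

lemma eq_zero_of_const_mul_szegoKernel_mem_modelSpace {Θ : ℂ → ℂ}
    (hΘ : DifferentiableOn ℂ Θ (ball 0 1)) {w c : ℂ} (hw : w ∈ ball 0 1) (hc : c ≠ 0)
    (h : (fun z => c * szegoKernel w z) ∈ ModelSpace Θ) : Θ w = 0 := by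
  have hk₀ := memH2_szegoKernel (mem_ball_self one_pos : (0 : ℂ) ∈ ball 0 1)
  have h₀ := h.2 _ hk₀
  rw [H2inner_const_mul_szegoKernel (f := fun z => Θ z * szegoKernel 0 z) (hΘ.mul hk₀.1) hw]
    at h₀
  simpa [szegoKernel, hc] using h₀

def psiA (t : ℝ) (w : ℂ) : ℂ := t * w / (1 - (1 - t) * w)

section psiA

variable {t : ℝ} {w : ℂ}

lemma psiA_denom_ne_zero (ht : t ∈ Icc (0 : ℝ) 1) (hw : ‖w‖ < 1) : 1 - (1 - (t : ℂ)) * w ≠ 0 :=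
  one_sub_mul_ne_zero_of_norm_le_one (by rw [norm_one_sub_ofReal ht]; linarith [ht.1]) hw

lemma psiA_mem_ball (ht : t ∈ Icc (0 : ℝ) 1) (hw : w ∈ ball 0 1) : psiA t w ∈ ball 0 1 := by
  rw [mem_ball_zero_iff] at hw ⊢
  have hden : 1 - (1 - t) * ‖w‖ ≤ ‖1 - (1 - (t : ℂ)) * w‖ := by
    simpa [norm_mul, norm_one_sub_ofReal ht] using norm_sub_norm_le (1 : ℂ) ((1 - t) * w)
  have hnum : t * ‖w‖ < 1 - (1 - t) * ‖w‖ := by linarith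
  have hpos : 0 < 1 - (1 - t) * ‖w‖ := by nlinarith [norm_nonneg w, ht.1]
  rw [psiA, norm_div, norm_mul, norm_real, Real.norm_of_nonneg ht.1]
  exact (div_lt_one (hpos.trans_le hden)).mpr (hnum.trans_le hden)

lemma psiA_ne_zero (ht : t ∈ Ioc (0 : ℝ) 1) (hw : ‖w‖ < 1) (hw0 : w ≠ 0) : psiA t w ≠ 0 :=
  div_ne_zero (mul_ne_zero (ofReal_ne_zero.mpr ht.1.ne') hw0)
    (psiA_denom_ne_zero (Ioc_subset_Icc_self ht) hw)

lemma psiA_one (w : ℂ) : psiA 1 w = w := by simp [psiA]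

lemma psiA_psiA (s : ℝ) (hD : 1 - (1 - (t : ℂ)) * w ≠ 0) :
    psiA s (psiA t w) = psiA (s * t) w := by
  have hden : 1 - (1 - (s : ℂ)) * (t * w / (1 - (1 - t) * w))
      = (1 - (1 - (s * t : ℂ)) * w) / (1 - (1 - t) * w) := by
    rw [eq_div_iff hD, sub_mul, one_mul, mul_assoc, div_mul_cancel₀ _ hD]
    ring
  rw [psiA, psiA, hden, ← mul_div_assoc, div_div_div_cancel_right₀ hD, psiA]
  push_cast
  ring

lemma tendsto_psiA_pow {a : ℝ} (ha : a ∈ Ico (0 : ℝ) 1) (hw : ‖w‖ < 1) :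
    Tendsto (fun n : ℕ => psiA (a ^ n) w) atTop (𝓝 0) := by
  have hcont : ContinuousAt (fun t : ℝ => psiA t w) 0 := by
    refine (continuous_ofReal.continuousAt.mul continuousAt_const).div
      (continuousAt_const.sub ((continuousAt_const.sub continuous_ofReal.continuousAt).mul
        continuousAt_const)) ?_
    simpa using one_sub_mul_ne_zero_of_norm_le_one norm_one.le hw
  have h := hcont.tendsto.comp (tendsto_pow_atTop_nhds_zero_of_lt_one ha.1 ha.2)
  rwa [show psiA 0 w = 0 by simp [psiA]] at h

end psiA

lemma szegoKernel_comp_phiA {a : ℝ} (ha : a ∈ Icc (0 : ℝ) 1) {w : ℂ} (hw : w ∈ ball 0 1) :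
    szegoKernel w ∘ phiA a =
      fun z => (1 - (1 - (a : ℂ)) * conj w)⁻¹ * szegoKernel (psiA a w) z := by
  have hd := psiA_denom_ne_zero ha (norm_conj_lt_one hw)
  funext z
  simp only [Function.comp, szegoKernel, phiA, psiA, map_div₀, map_mul, map_sub, map_one,
    conj_ofReal, ← mul_inv]
  congr 1
  rw [mul_sub _ 1, mul_one, ← mul_assoc, mul_div_cancel₀ _ hd]
  ring

section ZeroPropagation

variable {Θ : ℂ → ℂ} {a : ℝ} {w : ℂ}

lemma apply_psiA_eq_zero (hΘ : DifferentiableOn ℂ Θ (ball 0 1)) (ha : a ∈ Icc (0 : ℝ) 1)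
    (hinv : InvariantUnderOp (compOp (phiA a)) (ModelSpace Θ)) (hw : w ∈ ball 0 1)
    (h0 : Θ w = 0) : Θ (psiA a w) = 0 := by
  have himage := hinv _ (szegoKernel_mem_modelSpace hΘ hw h0)
  rw [compOp, szegoKernel_comp_phiA ha hw] at himage
  exact eq_zero_of_const_mul_szegoKernel_mem_modelSpace hΘ (psiA_mem_ball ha hw)
    (inv_ne_zero (psiA_denom_ne_zero ha (norm_conj_lt_one hw))) himage

lemma apply_psiA_pow_eq_zero (hΘ : DifferentiableOn ℂ Θ (ball 0 1)) (ha : a ∈ Icc (0 : ℝ) 1)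
    (hinv : InvariantUnderOp (compOp (phiA a)) (ModelSpace Θ)) (hw : w ∈ ball 0 1)
    (h0 : Θ w = 0) (n : ℕ) : Θ (psiA (a ^ n) w) = 0 := by
  induction n with
  | zero => rwa [pow_zero, psiA_one]
  | succ n ih =>
    have han : a ^ n ∈ Icc (0 : ℝ) 1 := ⟨pow_nonneg ha.1 n, pow_le_one₀ ha.1 ha.2⟩
    rw [pow_succ', ← psiA_psiA a (psiA_denom_ne_zero han (mem_ball_zero_iff.mp hw))]
    exact apply_psiA_eq_zero hΘ ha hinv (psiA_mem_ball han hw) ih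

end ZeroPropagation

/-- If `Θ` is a nonconstant inner function and the model space `(Θ H²)^⊥` is
`C_{φ_a}`-invariant, then `Θ(z₁) ≠ 0` for every `z₁ ∈ 𝔻` with `z₁ ≠ 0`. -/
theorem statement2 (a : ℝ) (ha : a ∈ Set.Ioo (0 : ℝ) 1) (Θ : ℂ → ℂ)
    (hΘ : IsInnerFn Θ) (hnc : NonconstantOnDisk Θ)
    (hinv : InvariantUnderOp (compOp (phiA a)) (ModelSpace Θ)) :
    ∀ z₁ ∈ ball (0 : ℂ) 1, z₁ ≠ 0 → Θ z₁ ≠ 0 := by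
  intro z₁ hz₁ hz₁0 hΘz₁
  have hΘd : DifferentiableOn ℂ Θ (ball 0 1) := hΘ.1.1
  have hz₁' : ‖z₁‖ < 1 := mem_ball_zero_iff.mp hz₁
  have hzeros := apply_psiA_pow_eq_zero hΘd (Ioo_subset_Icc_self ha) hinv hz₁ hΘz₁
  have hlim : Tendsto (fun n : ℕ => psiA (a ^ n) z₁) atTop (𝓝[≠] 0) :=
    tendsto_nhdsWithin_of_tendsto_nhds_of_eventually_within _
      (tendsto_psiA_pow (Ioo_subset_Ico_self ha) hz₁')
      (Eventually.of_forall fun n => psiA_ne_zero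
        ⟨pow_pos ha.1 n, pow_le_one₀ ha.1.le ha.2.le⟩ hz₁' hz₁0)
  have hΘzero : EqOn Θ 0 (ball 0 1) :=
    (hΘd.analyticOnNhd isOpen_ball).eqOn_zero_of_preconnected_of_frequently_eq_zero
      (convex_ball 0 1).isPreconnected (mem_ball_self one_pos)
      (hlim.frequently (Frequently.of_forall hzeros))
  obtain ⟨z, hz, w, hw, hzw⟩ := hnc
  exact hzw ((hΘzero hz).trans (hΘzero hw).symm)
end
end

section
/- Let a ∈ (0,1) and let Θ be an inner function such that the Beurling subspace ΘH² is C_{φ_a}-invariant. If Θ(z₀) = 0 for some z₀ ∈ 𝔻, then Θ(aⁿz₀ + 1 − aⁿ) = 0 for every n ∈ ℕ. -/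
/-!
Since `Θ = Θ · 1` lies in `Θ H²`, invariance gives `Θ ∘ φ_a = Θ g` on the disk for some
`g ∈ H²`. Hence `φ_a` maps the zeros of `Θ` in the disk to zeros of `Θ`, and the points
`aⁿ z₀ + 1 - aⁿ` are the iterates `φ_aⁿ(z₀)`.
-/

open Complex MeasureTheory Metric Set Filter Topology

noncomputable section

lemma memH2_const (c : ℂ) : MemH2 fun _ => c := by
  refine ⟨differentiableOn_const c, summable_of_ne_finset_zero (s := {0}) fun n hn => ?_⟩
  simp_all [H2coeff, iteratedDeriv_const]

lemma self_mem_beurlingSpace {Θ : ℂ → ℂ} (hΘ : MemH2 Θ) : Θ ∈ BeurlingSpace Θ :=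
  ⟨hΘ, fun _ => 1, memH2_const 1, fun z _ => (mul_one (Θ z)).symm⟩

lemma BeurlingSpace.apply_eq_zero_of_invariant {Θ φ : ℂ → ℂ} (hΘ : MemH2 Θ)
    (hinv : InvariantUnderOp (compOp φ) (BeurlingSpace Θ)) {z : ℂ} (hz : z ∈ ball (0 : ℂ) 1)
    (h0 : Θ z = 0) : Θ (φ z) = 0 := by
  obtain ⟨-, g, -, hfactor⟩ := hinv Θ (self_mem_beurlingSpace hΘ)
  simpa [compOp, h0] using hfactor hz

lemma BeurlingSpace.iterate_apply_eq_zero_of_invariant {Θ φ : ℂ → ℂ} (hΘ : MemH2 Θ)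
    (hinv : InvariantUnderOp (compOp φ) (BeurlingSpace Θ))
    (hφ : MapsTo φ (ball (0 : ℂ) 1) (ball (0 : ℂ) 1)) {z : ℂ} (hz : z ∈ ball (0 : ℂ) 1)
    (h0 : Θ z = 0) (n : ℕ) : Θ (φ^[n] z) = 0 := by
  induction n with
  | zero => exact h0
  | succ n ih =>
    rw [Function.iterate_succ_apply']
    exact apply_eq_zero_of_invariant hΘ hinv (hφ.iterate n hz) ih

lemma phiA_mapsTo_ball {a : ℝ} (ha : a ∈ Ioc (0 : ℝ) 1) :
    MapsTo (phiA a) (ball (0 : ℂ) 1) (ball (0 : ℂ) 1) := by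
  intro z hz
  rw [mem_ball_zero_iff] at hz ⊢
  have hsplit : phiA a z = (a : ℂ) * z + ((1 - a : ℝ) : ℂ) := by
    simp only [phiA, ofReal_sub, ofReal_one]; ring
  calc ‖phiA a z‖ ≤ ‖(a : ℂ) * z‖ + ‖((1 - a : ℝ) : ℂ)‖ := hsplit ▸ norm_add_le _ _
    _ = a * ‖z‖ + (1 - a) := by
      rw [norm_mul, norm_real, norm_real, Real.norm_of_nonneg ha.1.le,
        Real.norm_of_nonneg (sub_nonneg.2 ha.2)]
    _ < 1 := by nlinarith [ha.1]

lemma iterate_phiA (a : ℝ) (n : ℕ) (z : ℂ) :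
    (phiA a)^[n] z = (a : ℂ) ^ n * z + 1 - (a : ℂ) ^ n := by
  induction n with
  | zero => simp
  | succ n ih => rw [Function.iterate_succ_apply', ih, phiA]; ring

/-- If `Θ` is inner, `Θ H²` is `C_{φ_a}`-invariant and `Θ(z₀) = 0` for some
`z₀ ∈ 𝔻`, then `Θ(aⁿ z₀ + 1 - aⁿ) = 0` for every `n ∈ ℕ`. -/
theorem statement18 (a : ℝ) (ha : a ∈ Set.Ioo (0 : ℝ) 1) (Θ : ℂ → ℂ) (hΘ : IsInnerFn Θ)
    (hinv : InvariantUnderOp (compOp (phiA a)) (BeurlingSpace Θ))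
    (z₀ : ℂ) (hz₀ : z₀ ∈ ball (0 : ℂ) 1) (h0 : Θ z₀ = 0) :
    ∀ n : ℕ, Θ ((a : ℂ) ^ n * z₀ + 1 - (a : ℂ) ^ n) = 0 := by
  intro n
  rw [← iterate_phiA]
  exact BeurlingSpace.iterate_apply_eq_zero_of_invariant hΘ.1 hinv
    (phiA_mapsTo_ball (Ioo_subset_Ioc_self ha)) hz₀ h0 n
end
end
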